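/- Let D be an Eulerian digraph and fix an edge e with initial vertex r. The number of Eulerian tours of D beginning with e equals the number of oriented spanning trees of D rooted at r multiplied by the product over all vertices u of (outdeg(u) - 1)!. -/

import Mathlib

open Classical

/-- A finite multidigraph: finite vertex and edge types with initial and final
vertex maps. -/
structure Multidigraph where
  V : Type
  E : Type
  [fintV : Fintype V]
  [fintE : Fintype E]
  first : E → V
  last : E → V

attribute [instance] Multidigraph.fintV Multidigraph.fintE

namespace Multidigraph

variable (D : Multidigraph)

/-- The out-degree of a vertex. -/
noncomputable def outdeg (v : D.V) : ℕ := Nat.card {e : D.E // D.first e = v}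

/-- The in-degree of a vertex. -/
noncomputable def indeg (v : D.V) : ℕ := Nat.card {e : D.E // D.last e = v}

/-- Undirected adjacency using only edges in `T`. -/
def Adj (T : Set D.E) (a b : D.V) : Prop :=
  ∃ e ∈ T, (D.first e = a ∧ D.last e = b) ∨ (D.first e = b ∧ D.last e = a)

/-- Undirected reachability using only edges in `T`. -/
def Reach (T : Set D.E) : D.V → D.V → Prop := Relation.ReflTransGen (D.Adj T)

/-- The underlying undirected graph is connected. -/
def Connected : Prop := ∀ a b : D.V, D.Reach Set.univ a b

/-- An Eulerian digraph: connected and with in-degree equal to out-degree at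
every vertex. -/
def Eulerian : Prop := D.Connected ∧ ∀ v : D.V, D.indeg v = D.outdeg v

/-- `T` is a spanning tree of the underlying undirected graph: it connects all
vertices and has `|V| - 1` edges. -/
def IsSpanningTree (T : Set D.E) : Prop :=
  (∀ a b : D.V, D.Reach T a b) ∧ Nat.card T = Nat.card D.V - 1

/-- The out-degree of `v` in the subgraph `T` after reversing the orientations
of the edges in `S`. -/
noncomputable def outdegRev (T S : Set D.E) (v : D.V) : ℕ :=
  Nat.card {e : D.E // (e ∈ T \ S ∧ D.first e = v) ∨ (e ∈ S ∧ D.last e = v)}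

/-- `T` becomes an oriented spanning tree rooted at `r` (every vertex has a
unique directed path to `r`, i.e. every non-root vertex has out-degree `1` and
the root has out-degree `0` in the tree) after reversing exactly the edges of
`S ⊆ T`. -/
def IsOrientedSpanningTreeRev (T S : Set D.E) (r : D.V) : Prop :=
  D.IsSpanningTree T ∧ S ⊆ T ∧ (∀ v : D.V, v ≠ r → D.outdegRev T S v = 1) ∧
    D.outdegRev T S r = 0

/-- `T` is an oriented spanning tree rooted at `r`: every vertex has a unique
directed path to `r`. -/
def IsOrientedSpanningTree (T : Set D.E) (r : D.V) : Prop :=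
  D.IsOrientedSpanningTreeRev T ∅ r

/-- `T` is a `k`-spanning tree rooted at `r`: reversing the orientation of
exactly `k` of its edges yields an oriented spanning tree rooted at `r`. -/
def IsKSpanningTree (T : Set D.E) (r : D.V) (k : ℕ) : Prop :=
  ∃ S : Set D.E, Nat.card S = k ∧ D.IsOrientedSpanningTreeRev T S r

/-- `c D k r` is the number of `k`-spanning trees of `D` rooted at `r`. -/
noncomputable def c (k : ℕ) (r : D.V) : ℕ :=
  Nat.card {T : Set D.E // D.IsKSpanningTree T r k}

/-- The transpose digraph: every edge reversed. -/
def transpose : Multidigraph := { D with first := D.last, last := D.first }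

end Multidigraph


/-- Cyclic successor on `Fin m`. -/
def cyclicSucc {m : ℕ} (i : Fin m) : Fin m := ⟨(i.1 + 1) % m, Nat.mod_lt _ i.pos⟩

namespace Multidigraph

variable (D : Multidigraph)

/-- An Eulerian tour of `D`: a cyclic listing of all edges in which the final
vertex of each edge is the initial vertex of the next. -/
def IsEulerianTour (σ : Fin (Fintype.card D.E) ≃ D.E) : Prop :=
  ∀ i, D.last (σ i) = D.first (σ (cyclicSucc i))

/-- The tour `σ` begins with the edge `e`. -/
def BeginsWith (σ : Fin (Fintype.card D.E) ≃ D.E) (e : D.E) : Prop :=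
  ∃ h : 0 < Fintype.card D.E, σ ⟨0, h⟩ = e

end Multidigraph

/-!
An Eulerian tour starting with `e` orders, at every vertex, the edges by which it leaves. At each
vertex `v ≠ r` the edge used last leads to a vertex that is left for the last time even later, so
these last exits form an oriented spanning tree rooted at `r`; in the orderings `e` comes first and
the tree edges come last. Conversely, given such a tree and such orderings, the walk that always
leaves by the lowest-ranked unused edge can only get stuck at `r`, and by then it has used every
edge: in-degree equals out-degree, and the tree edge out of a vertex is used only after all other
exits. That walk is a tour reproducing the orderings. For a fixed tree the orderings are counted
vertex by vertex, giving `(outdeg u - 1)!` choices at each `u`.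
-/

open Finset

theorem Equiv.eq_of_lt_imp_lt {α β : Type*} [LinearOrder β] [Finite β] {g h : α ≃ β}
    (H : ∀ x y, g x < g y → h x < h y) : g = h := by
  have hmono : StrictMono (g.symm.trans h) := fun a b hab => by
    simpa using H (g.symm a) (g.symm b) (by simpa using hab)
  ext x
  simpa using (hmono.apply_eq (x := g x)).symm

theorem Nat.card_equiv_apply_eq {α β : Type*} [Fintype α] [Fintype β]
    (hαβ : Fintype.card α = Fintype.card β) (a : α) (b : β) :
    Nat.card {g : α ≃ β // g a = b} = Nat.factorial (Fintype.card α - 1) := by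
  let fixA : {g : α ≃ β // g a = b} ≃ {g : Option {x // x ≠ a} ≃ β // g none = b} :=
    (Equiv.equivCongr (Equiv.optionSubtypeNe a).symm (Equiv.refl β)).subtypeEquiv
      fun g => by simp
  have hcard : Fintype.card {x // x ≠ a} = Fintype.card {y // y ≠ b} := by
    simp [Fintype.card_subtype_compl, hαβ]
  rw [Nat.card_congr (fixA.trans (Equiv.optionSubtype b)), Nat.card_eq_fintype_card,
    Fintype.card_equiv (Fintype.equivOfCardEq hcard), Fintype.card_subtype_compl,
    Fintype.card_subtype_eq]

theorem Relation.reflTransGen_of_exists_measure_lt {α : Type*} {R : α → α → Prop} (μ : α → ℕ)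
    {r : α} (h : ∀ a, a ≠ r → ∃ b, R a b ∧ (b ≠ r → μ b < μ a)) (a : α) :
    ReflTransGen R a r := by
  induction hμ : μ a using Nat.strong_induction_on generalizing a with
  | _ n ih =>
    by_cases har : a = r
    · exact har ▸ .refl
    obtain ⟨b, hab, hb⟩ := h a har
    by_cases hbr : b = r
    · exact .single (hbr ▸ hab)
    exact .head hab (ih _ (hμ ▸ hb hbr) b rfl)

theorem Finset.card_inter_eq_card_right_iff {α : Type*} [DecidableEq α] {s t : Finset α} :
    #(s ∩ t) = #t ↔ t ⊆ s := by
  rw [← inter_eq_right]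
  exact ⟨fun h => eq_of_subset_of_card_le inter_subset_right h.ge, congrArg card⟩

theorem Finset.card_insert_inter_of_notMem {α : Type*} [DecidableEq α] {a : α}
    {s t : Finset α} (ha : a ∉ s) : #(insert a s ∩ t) = #(s ∩ t) + if a ∈ t then 1 else 0 := by
  split_ifs with hat
  · rw [insert_inter_of_mem hat, card_insert_of_notMem fun h => ha (mem_inter.mp h).1]
  · rw [insert_inter_of_notMem hat, add_zero]

theorem cyclicSucc_of_lt {m : ℕ} {i : Fin m} (h : (i : ℕ) + 1 < m) : cyclicSucc i = ⟨i + 1, h⟩ :=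
  Fin.ext (Nat.mod_eq_of_lt h)

theorem cyclicSucc_of_eq {m : ℕ} {i : Fin m} (h : (i : ℕ) + 1 = m) :
    cyclicSucc i = ⟨0, i.pos⟩ :=
  Fin.ext (by simp [cyclicSucc, h])

namespace Multidigraph

section Basic

variable (D : Multidigraph)

noncomputable def outEdges (v : D.V) : Finset D.E := {x | D.first x = v}

noncomputable def inEdges (v : D.V) : Finset D.E := {x | D.last x = v}

variable {D}

@[simp]
theorem mem_outEdges {v : D.V} {x : D.E} : x ∈ D.outEdges v ↔ D.first x = v := by
  simp [outEdges]

@[simp]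
theorem mem_inEdges {v : D.V} {x : D.E} : x ∈ D.inEdges v ↔ D.last x = v := by
  simp [inEdges]

theorem card_outEdges (v : D.V) : #(D.outEdges v) = D.outdeg v := by
  rw [outdeg, Nat.card_eq_fintype_card, Fintype.card_subtype]
  rfl

theorem card_inEdges (v : D.V) : #(D.inEdges v) = D.indeg v := by
  rw [indeg, Nat.card_eq_fintype_card, Fintype.card_subtype]
  rfl

theorem outdeg_first_pos (x : D.E) : 0 < D.outdeg (D.first x) :=
  Nat.card_pos_iff.mpr ⟨⟨⟨x, rfl⟩⟩, inferInstance⟩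

theorem Eulerian.outdeg_pos (hD : D.Eulerian) (e : D.E) (v : D.V) : 0 < D.outdeg v := by
  obtain rfl | ⟨w, ⟨x, -, hx⟩, -⟩ := Relation.ReflTransGen.cases_head (hD.1 v (D.first e))
  · exact outdeg_first_pos e
  rcases hx with ⟨rfl, -⟩ | ⟨-, rfl⟩
  · exact outdeg_first_pos x
  · rw [← hD.2]
    exact Nat.card_pos_iff.mpr ⟨⟨⟨x, rfl⟩⟩, inferInstance⟩

theorem Reach.symm {T : Set D.E} {a b : D.V} (h : D.Reach T a b) : D.Reach T b a :=
  have : Std.Symm (D.Adj T) := ⟨fun _ _ ⟨x, hx, hab⟩ => ⟨x, hx, hab.symm⟩⟩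
  Std.Symm.symm (r := Relation.ReflTransGen (D.Adj T)) _ _ h

end Basic

section OrientedSpanningTree

variable {D : Multidigraph} {T : Set D.E} {r : D.V}

theorem outdegRev_empty (T : Set D.E) (v : D.V) :
    D.outdegRev T ∅ v = Nat.card {x : D.E // x ∈ T ∧ D.first x = v} :=
  Nat.card_congr (Equiv.subtypeEquivRight (by simp))

theorem isOrientedSpanningTree_iff :
    D.IsOrientedSpanningTree T r ↔ (∀ x ∈ T, D.first x ≠ r) ∧
      (∀ v, v ≠ r → ∃! x, x ∈ T ∧ D.first x = v) ∧ ∀ v, D.Reach T v r := by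
  simp only [IsOrientedSpanningTree, IsOrientedSpanningTreeRev, IsSpanningTree, outdegRev_empty,
    Set.empty_subset, true_and, Finite.card_eq_zero_iff, Nat.card_eq_one_iff_unique]
  constructor
  · rintro ⟨⟨hreach, -⟩, hone, hzero⟩
    refine ⟨fun x hx hxr => hzero.false ⟨x, hx, hxr⟩, fun v hv => ?_, fun v => hreach v r⟩
    obtain ⟨hsub, ⟨x⟩⟩ := hone v hv
    exact ⟨x, x.2, fun y hy => congrArg Subtype.val (hsub.elim ⟨y, hy⟩ x)⟩
  · rintro ⟨hroot, huniq, hreach⟩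
    have hfirst : Function.Bijective fun x : T => (⟨D.first x, hroot x x.2⟩ : {v // v ≠ r}) := by
      refine ⟨fun x y hxy => Subtype.ext ((huniq _ (hroot x x.2)).unique ⟨x.2, rfl⟩
        ⟨y.2, (congrArg Subtype.val hxy).symm⟩), fun v => ?_⟩
      obtain ⟨x, ⟨hx, hxv⟩, -⟩ := huniq v v.2
      exact ⟨⟨x, hx⟩, Subtype.ext hxv⟩
    refine ⟨⟨fun a b => (hreach a).trans (hreach b).symm, ?_⟩, fun v hv => ?_,
      ⟨fun x => hroot x x.2.1 x.2.2⟩⟩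
    · rw [Nat.card_congr (Equiv.ofBijective _ hfirst), Nat.card_eq_fintype_card,
        Fintype.card_subtype_compl, Fintype.card_subtype_eq, Nat.card_eq_fintype_card]
    · obtain ⟨x, hx, huniq⟩ := huniq v hv
      exact ⟨⟨fun y z => Subtype.ext ((huniq _ y.2).trans (huniq _ z.2).symm)⟩, ⟨⟨x, hx⟩⟩⟩

theorem IsOrientedSpanningTree.induction (hT : D.IsOrientedSpanningTree T r) {P : D.V → Prop}
    (hr : P r) (hstep : ∀ x ∈ T, P (D.last x) → P (D.first x)) (v : D.V) : P v := by
  obtain ⟨hroot, huniq, hreach⟩ := isOrientedSpanningTree_iff.mp hT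
  let R : D.V → D.V → Prop := fun a b => ∃ x ∈ T, D.first x = a ∧ D.last x = b
  have hedge : ∀ x ∈ T,
      Relation.ReflTransGen R (D.first x) r ↔ Relation.ReflTransGen R (D.last x) r := by
    refine fun x hx => ⟨fun h => ?_, fun h => .head ⟨x, hx, rfl, rfl⟩ h⟩
    obtain h | ⟨c, ⟨y, hy, hyx, rfl⟩, hc⟩ := h.cases_head
    · exact absurd h (hroot x hx)
    · rwa [(huniq _ (hroot x hx)).unique ⟨hy, hyx⟩ ⟨hx, rfl⟩] at hc
  have hdir : ∀ v, Relation.ReflTransGen R v r := fun v => by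
    induction (hreach v : Relation.ReflTransGen (D.Adj T) v r)
      using Relation.ReflTransGen.head_induction_on with
    | refl => exact .refl
    | head hab _ ih =>
      obtain ⟨x, hx, ⟨rfl, rfl⟩ | ⟨rfl, rfl⟩⟩ := hab
      · exact (hedge x hx).mpr ih
      · exact (hedge x hx).mp ih
  induction hdir v using Relation.ReflTransGen.head_induction_on with
  | refl => exact hr
  | head hab _ ih =>
    obtain ⟨x, hx, rfl, rfl⟩ := hab
    exact hstep x hx ih

end OrientedSpanningTree

section Ranking

variable (D : Multidigraph)

def Ranking : Type := ∀ v : D.V, {x : D.E // D.first x = v} ≃ Fin (D.outdeg v)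

def IsAdmissibleAt (e : D.E) (T : Set D.E) (v : D.V)
    (gv : {x : D.E // D.first x = v} ≃ Fin (D.outdeg v)) : Prop :=
  (∀ hx : D.first e = v, (gv ⟨e, hx⟩ : ℕ) = 0) ∧
    ∀ x (hx : D.first x = v), x ∈ T → (gv ⟨x, hx⟩ : ℕ) = D.outdeg v - 1

variable {D}

namespace Ranking

variable (g : D.Ranking)

def rank (x : D.E) : ℕ := g (D.first x) ⟨x, rfl⟩

def topEdges (r : D.V) : Set D.E := {x | D.first x ≠ r ∧ g.rank x = D.outdeg (D.first x) - 1}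

variable {g}

theorem rank_eq {v : D.V} {x : D.E} (hx : D.first x = v) : g.rank x = g v ⟨x, hx⟩ := by
  subst hx
  rfl

theorem rank_lt (x : D.E) : g.rank x < D.outdeg (D.first x) :=
  (g _ _).2

theorem rank_symm_apply (v : D.V) (i : Fin (D.outdeg v)) : g.rank ((g v).symm i) = i := by
  rw [rank_eq ((g v).symm i).2]
  simp

theorem eq_of_rank_eq {x y : D.E} (hxy : D.first x = D.first y) (h : g.rank x = g.rank y) :
    x = y := by
  rw [rank_eq hxy, rank_eq rfl] at h
  exact congrArg Subtype.val ((g _).injective (Fin.ext h))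

theorem rank_eq_zero_iff (x : D.E) :
    g.rank x = 0 ↔ ∀ y, D.first y = D.first x → g.rank x ≤ g.rank y := by
  refine ⟨fun h y _ => h ▸ Nat.zero_le _, fun h => ?_⟩
  have := h _ ((g (D.first x)).symm ⟨0, outdeg_first_pos x⟩).2
  rwa [rank_symm_apply, Nat.le_zero] at this

theorem rank_eq_outdeg_sub_one_iff (x : D.E) :
    g.rank x = D.outdeg (D.first x) - 1 ↔ ∀ y, D.first y = D.first x → g.rank y ≤ g.rank x := by
  have hx := rank_lt (g := g) x
  refine ⟨fun h y hy => ?_, fun h => ?_⟩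
  · have := rank_lt (g := g) y
    rw [hy] at this
    omega
  · have := h _ ((g (D.first x)).symm ⟨D.outdeg (D.first x) - 1, by omega⟩).2
    rw [rank_symm_apply, Fin.val_mk] at this
    omega

end Ranking

variable {e : D.E} {T : Set D.E} {r : D.V} {g : D.Ranking}

theorem forall_isAdmissibleAt_iff :
    (∀ v, D.IsAdmissibleAt e T v (g v)) ↔
      g.rank e = 0 ∧ ∀ x ∈ T, g.rank x = D.outdeg (D.first x) - 1 := by
  refine ⟨fun h => ⟨(h _).1 rfl, fun x hx => (h _).2 x rfl hx⟩, fun ⟨he, hT⟩ v => ?_⟩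
  refine ⟨fun hx => by rw [← Ranking.rank_eq hx, he], fun x hx hxT => ?_⟩
  rw [← Ranking.rank_eq hx, ← hx, hT x hxT]

theorem IsOrientedSpanningTree.eq_topEdges (hT : D.IsOrientedSpanningTree T r)
    (hg : ∀ x ∈ T, g.rank x = D.outdeg (D.first x) - 1) : T = g.topEdges r := by
  obtain ⟨hroot, huniq, -⟩ := isOrientedSpanningTree_iff.mp hT
  ext x
  refine ⟨fun hx => ⟨hroot x hx, hg x hx⟩, fun ⟨hxr, hx⟩ => ?_⟩
  obtain ⟨t, ⟨ht, htx⟩, -⟩ := huniq _ hxr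
  rwa [Ranking.eq_of_rank_eq htx.symm (by rw [hx, hg t ht, htx])]

theorem card_isAdmissibleAt (he : D.first e = r) (hT : D.IsOrientedSpanningTree T r) (v : D.V) :
    Nat.card {gv // D.IsAdmissibleAt e T v gv} = Nat.factorial (D.outdeg v - 1) := by
  obtain ⟨hroot, huniq, -⟩ := isOrientedSpanningTree_iff.mp hT
  obtain ⟨x, hx, i, hiff⟩ : ∃ x, ∃ hx : D.first x = v, ∃ i : Fin (D.outdeg v),
      ∀ gv, D.IsAdmissibleAt e T v gv ↔ gv ⟨x, hx⟩ = i := by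
    by_cases hv : v = r
    · subst hv
      refine ⟨e, he, ⟨0, he ▸ outdeg_first_pos e⟩, fun gv => ⟨fun h => Fin.ext (h.1 he),
        fun h => ⟨fun _ => by rw [h], fun x hx hxT => absurd hx (hroot x hxT)⟩⟩⟩
    · obtain ⟨t, ⟨ht, htv⟩, htuniq⟩ := huniq v hv
      have hpos : 0 < D.outdeg v := htv ▸ outdeg_first_pos t
      refine ⟨t, htv, ⟨D.outdeg v - 1, by omega⟩, fun gv => ⟨fun h => Fin.ext (h.2 t htv ht),
        fun h => ⟨fun hev => absurd (hev ▸ he) hv, fun x hx hxT => ?_⟩⟩⟩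
      obtain rfl := htuniq x ⟨hxT, hx⟩
      rw [h]
  have hcard : Fintype.card {x : D.E // D.first x = v} = D.outdeg v :=
    Nat.card_eq_fintype_card.symm
  rw [Nat.card_congr (Equiv.subtypeEquivRight hiff), Nat.card_equiv_apply_eq (by simp [hcard]),
    hcard]

variable (D) in
def TreeRanking (e : D.E) (r : D.V) : Type :=
  Σ T : {T : Set D.E // D.IsOrientedSpanningTree T r}, ∀ v, {gv // D.IsAdmissibleAt e T v gv}

def TreeRanking.ranking (d : D.TreeRanking e r) : D.Ranking := fun v => (d.2 v).1

theorem TreeRanking.ext {d d' : D.TreeRanking e r} (h : d.ranking = d'.ranking) : d = d' := by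
  obtain ⟨⟨T, hT⟩, f⟩ := d
  obtain ⟨⟨T', hT'⟩, f'⟩ := d'
  obtain rfl : T = T' := by
    rw [hT.eq_topEdges (forall_isAdmissibleAt_iff.mp fun v => (f v).2).2,
      hT'.eq_topEdges (forall_isAdmissibleAt_iff.mp fun v => (f' v).2).2]
    exact congrArg (Ranking.topEdges · r) h
  obtain rfl : f = f' := funext fun v => Subtype.ext (congrFun h v)
  rfl

theorem card_treeRanking (he : D.first e = r) :
    Nat.card (D.TreeRanking e r) = Nat.card {T : Set D.E // D.IsOrientedSpanningTree T r} *
      ∏ u : D.V, Nat.factorial (D.outdeg u - 1) := by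
  rw [TreeRanking, Nat.card_sigma, Finset.sum_congr rfl fun T _ => by
    rw [Nat.card_pi, Finset.prod_congr rfl fun v _ => card_isAdmissibleAt he T.2 v],
    Finset.sum_const, smul_eq_mul, Finset.card_univ, Nat.card_eq_fintype_card]

end Ranking

structure WalkState (D : Multidigraph) where
  used : Finset D.E
  edge : D.E

section GreedyWalk

variable {D : Multidigraph}

namespace WalkState

noncomputable def candidates (p : D.WalkState) : Finset D.E :=
  {y | D.first y = D.last p.edge ∧ y ∉ p.used}

@[simp]
theorem mem_candidates {p : D.WalkState} {y : D.E} :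
    y ∈ p.candidates ↔ D.first y = D.last p.edge ∧ y ∉ p.used := by
  simp [candidates]

noncomputable def greedyStep (rank : D.E → ℕ) (p : D.WalkState) : D.WalkState :=
  if h : p.candidates.Nonempty then
    ⟨insert (p.candidates.exists_min_image rank h).choose p.used,
      (p.candidates.exists_min_image rank h).choose⟩
  else p

theorem used_subset_greedyStep (rank : D.E → ℕ) (p : D.WalkState) :
    p.used ⊆ (p.greedyStep rank).used := by
  unfold greedyStep
  split_ifs
  exacts [subset_insert _ _, subset_rfl]

theorem edge_mem_used_greedyStep {rank : D.E → ℕ} {p : D.WalkState} (h : p.edge ∈ p.used) :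
    (p.greedyStep rank).edge ∈ (p.greedyStep rank).used := by
  unfold greedyStep
  split_ifs
  exacts [mem_insert_self _ _, h]

end WalkState

open WalkState

noncomputable def greedyWalk (e : D.E) (rank : D.E → ℕ) : ℕ → D.WalkState
  | 0 => ⟨{e}, e⟩
  | k + 1 => (greedyWalk e rank k).greedyStep rank

def GreedyAlive (e : D.E) (rank : D.E → ℕ) (k : ℕ) : Prop :=
  ∀ j < k, (greedyWalk e rank j).candidates.Nonempty

variable {e : D.E} {rank : D.E → ℕ} {i j k : ℕ}

theorem greedyWalk_succ (h : (greedyWalk e rank k).candidates.Nonempty) :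
    (greedyWalk e rank (k + 1)).edge ∈ (greedyWalk e rank k).candidates ∧
      (∀ y ∈ (greedyWalk e rank k).candidates, rank (greedyWalk e rank (k + 1)).edge ≤ rank y) ∧
      (greedyWalk e rank (k + 1)).used =
        insert (greedyWalk e rank (k + 1)).edge (greedyWalk e rank k).used := by
  have hmin := (exists_min_image _ rank h).choose_spec
  have hstep : greedyWalk e rank (k + 1) =
      ⟨insert (exists_min_image _ rank h).choose (greedyWalk e rank k).used,
        (exists_min_image _ rank h).choose⟩ := by
    simp only [greedyWalk, greedyStep, dif_pos h]
  rw [hstep]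
  exact ⟨hmin.1, hmin.2, rfl⟩

theorem greedyWalk_used_mono (e : D.E) (rank : D.E → ℕ) :
    Monotone fun k => (greedyWalk e rank k).used :=
  monotone_nat_of_le_succ fun _ => used_subset_greedyStep _ _

theorem greedyWalk_edge_mem_used (k : ℕ) :
    (greedyWalk e rank k).edge ∈ (greedyWalk e rank k).used := by
  induction k with
  | zero => exact mem_singleton_self e
  | succ k ih => exact edge_mem_used_greedyStep ih

theorem GreedyAlive.mono (h : GreedyAlive e rank k) (hjk : j ≤ k) : GreedyAlive e rank j :=
  fun i hi => h i (hi.trans_le hjk)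

theorem GreedyAlive.edge_ne (h : GreedyAlive e rank k) (hij : i < j) (hjk : j ≤ k) :
    (greedyWalk e rank i).edge ≠ (greedyWalk e rank j).edge := by
  obtain ⟨j, rfl⟩ : ∃ j', j = j' + 1 := ⟨j - 1, by omega⟩
  have hnew := (mem_candidates.mp (greedyWalk_succ (h j (by omega))).1).2
  exact fun hij' =>
    hnew (hij' ▸ greedyWalk_used_mono e rank (by omega) (greedyWalk_edge_mem_used i))

theorem GreedyAlive.mem_used_iff (h : GreedyAlive e rank k) {x : D.E} :
    x ∈ (greedyWalk e rank k).used ↔ ∃ j ≤ k, (greedyWalk e rank j).edge = x := by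
  induction k with
  | zero => simp [greedyWalk, eq_comm]
  | succ k ih =>
    rw [(greedyWalk_succ (h k k.lt_succ_self)).2.2, mem_insert, ih (h.mono k.le_succ)]
    constructor
    · rintro (rfl | ⟨j, hj, rfl⟩)
      exacts [⟨k + 1, le_rfl, rfl⟩, ⟨j, by omega, rfl⟩]
    · rintro ⟨j, hj, rfl⟩
      rcases Nat.lt_or_eq_of_le hj with hj | rfl
      exacts [Or.inr ⟨j, by omega, rfl⟩, Or.inl rfl]

theorem GreedyAlive.card_used (h : GreedyAlive e rank k) :
    #(greedyWalk e rank k).used = k + 1 := by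
  induction k with
  | zero => simp [greedyWalk]
  | succ k ih =>
    obtain ⟨hmem, -, hused⟩ := greedyWalk_succ (h k k.lt_succ_self)
    rw [hused, card_insert_of_notMem (mem_candidates.mp hmem).2, ih (h.mono k.le_succ)]

theorem GreedyAlive.card_inter_inEdges_add (h : GreedyAlive e rank k) (v : D.V) :
    #((greedyWalk e rank k).used ∩ D.inEdges v) + (if D.first e = v then 1 else 0) =
      #((greedyWalk e rank k).used ∩ D.outEdges v) +
        (if D.last (greedyWalk e rank k).edge = v then 1 else 0) := by
  induction k with
  | zero =>
    simp only [greedyWalk]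
    split_ifs <;> simp_all [singleton_inter_of_mem, singleton_inter_of_notMem]
  | succ k ih =>
    obtain ⟨hmem, -, hused⟩ := greedyWalk_succ (h k k.lt_succ_self)
    obtain ⟨hfirst, hnew⟩ := mem_candidates.mp hmem
    have := ih (h.mono k.le_succ)
    rw [← hfirst] at this
    rw [hused, card_insert_inter_of_notMem hnew, card_insert_inter_of_notMem hnew]
    simp only [mem_inEdges, mem_outEdges]
    split_ifs at * <;> omega

end GreedyWalk

section GreedyTour

open WalkState

variable {D : Multidigraph} {e : D.E} {T : Set D.E} {g : D.Ranking} {i j k : ℕ}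

theorem GreedyAlive.rank_lt_rank (hg : g.rank e = 0) (h : GreedyAlive e g.rank k) (hij : i < j)
    (hjk : j ≤ k)
    (hfirst : D.first (greedyWalk e g.rank i).edge = D.first (greedyWalk e g.rank j).edge) :
    g.rank (greedyWalk e g.rank i).edge < g.rank (greedyWalk e g.rank j).edge := by
  refine lt_of_le_of_ne ?_ fun hr => h.edge_ne hij hjk (Ranking.eq_of_rank_eq hfirst hr)
  cases i with
  | zero => exact hg.trans_le (Nat.zero_le _)
  | succ i =>
    obtain ⟨hmem, hmin, -⟩ := greedyWalk_succ (h i (by omega))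
    refine hmin _ (mem_candidates.mpr ⟨hfirst.symm.trans (mem_candidates.mp hmem).1, fun hj => ?_⟩)
    obtain ⟨l, hl, hlj⟩ := (h.mono (by omega : i ≤ k)).mem_used_iff.mp hj
    exact h.edge_ne (by omega : l < j) hjk hlj

theorem GreedyAlive.outEdges_subset_used (h : GreedyAlive e g.rank k) {x : D.E}
    (hx : x ∈ (greedyWalk e g.rank k).used) (hxe : x ≠ e)
    (htop : g.rank x = D.outdeg (D.first x) - 1) :
    D.outEdges (D.first x) ⊆ (greedyWalk e g.rank k).used := by
  obtain ⟨j, hjk, rfl⟩ := h.mem_used_iff.mp hx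
  cases j with
  | zero => exact absurd rfl hxe
  | succ j =>
    obtain ⟨hmem, hmin, -⟩ := greedyWalk_succ (h j (by omega))
    intro y hy
    by_contra hyk
    have hyfirst : D.first y = D.first (greedyWalk e g.rank (j + 1)).edge := mem_outEdges.mp hy
    have hyj : y ∉ (greedyWalk e g.rank j).used :=
      fun hyj => hyk (greedyWalk_used_mono e _ (by omega) hyj)
    have hle := hmin y (mem_candidates.mpr ⟨hyfirst.trans (mem_candidates.mp hmem).1, hyj⟩)
    have hlt := Ranking.rank_lt (g := g) y
    rw [hyfirst] at hlt
    exact hyk (Ranking.eq_of_rank_eq (g := g) hyfirst (by omega) ▸ hx)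

theorem GreedyAlive.stuck (hD : D.Eulerian) (hT : D.IsOrientedSpanningTree T (D.first e))
    (hg : ∀ x ∈ T, g.rank x = D.outdeg (D.first x) - 1) (h : GreedyAlive e g.rank k)
    (hstuck : ¬(greedyWalk e g.rank k).candidates.Nonempty) :
    D.last (greedyWalk e g.rank k).edge = D.first e ∧ (greedyWalk e g.rank k).used = univ := by
  have hbal := h.card_inter_inEdges_add
  set s := (greedyWalk e g.rank k).used
  have hlast : D.outEdges (D.last (greedyWalk e g.rank k).edge) ⊆ s := fun y hy => by
    by_contra hys
    exact hstuck ⟨y, mem_candidates.mpr ⟨mem_outEdges.mp hy, hys⟩⟩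
  have hin := fun v => card_le_card (inter_subset_right : s ∩ D.inEdges v ⊆ D.inEdges v)
  simp only [card_inEdges] at hin
  -- all exits of the current vertex are used, so a surplus of entries forces it to be the start
  have hr : D.last (greedyWalk e g.rank k).edge = D.first e := by
    by_contra hne
    have hu := hbal (D.last (greedyWalk e g.rank k).edge)
    rw [if_neg (Ne.symm hne), if_pos rfl, card_inter_eq_card_right_iff.mpr hlast,
      card_outEdges, ← hD.2] at hu
    have := hin (D.last (greedyWalk e g.rank k).edge)
    omega
  have hin_of_out : ∀ v, D.outEdges v ⊆ s → D.inEdges v ⊆ s := fun v hv => by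
    have := hbal v
    rw [hr, card_inter_eq_card_right_iff.mpr hv, card_outEdges, ← hD.2] at this
    exact card_inter_eq_card_right_iff.mp (by rw [card_inEdges]; omega)
  have hroot := (isOrientedSpanningTree_iff.mp hT).1
  have hall : ∀ v, D.outEdges v ⊆ s := hT.induction (hr ▸ hlast) fun x hxT hx =>
    h.outEdges_subset_used (hin_of_out _ hx (mem_inEdges.mpr rfl))
      (fun hxe => hroot x hxT (hxe ▸ rfl)) (hg x hxT)
  exact ⟨hr, eq_univ_of_forall fun x => hall _ (mem_outEdges.mpr rfl)⟩

theorem greedyAlive_card_sub_one (hD : D.Eulerian) (hT : D.IsOrientedSpanningTree T (D.first e))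
    (hg : ∀ x ∈ T, g.rank x = D.outdeg (D.first x) - 1) :
    GreedyAlive e g.rank (Fintype.card D.E - 1) := by
  suffices ∀ k ≤ Fintype.card D.E - 1, GreedyAlive e g.rank k from this _ le_rfl
  intro k
  induction k with
  | zero => exact fun _ j hj => absurd hj (Nat.not_lt_zero j)
  | succ k ih =>
    intro hk
    have h := ih (by omega)
    have hne : (greedyWalk e g.rank k).candidates.Nonempty := by
      by_contra hstuck
      have := h.card_used
      rw [(h.stuck hD hT hg hstuck).2, card_univ] at this
      omega
    intro j hj
    rcases Nat.lt_succ_iff_lt_or_eq.mp hj with hj | rfl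
    exacts [h j hj, hne]

theorem exists_isEulerianTour_eq_greedyWalk (hD : D.Eulerian)
    (hT : D.IsOrientedSpanningTree T (D.first e))
    (hg : ∀ x ∈ T, g.rank x = D.outdeg (D.first x) - 1) :
    ∃ σ : Fin (Fintype.card D.E) ≃ D.E, D.IsEulerianTour σ ∧ D.BeginsWith σ e ∧
      ∀ i, σ i = (greedyWalk e g.rank i).edge := by
  have hpos : 0 < Fintype.card D.E := Fintype.card_pos_iff.mpr ⟨e⟩
  have h := greedyAlive_card_sub_one hD hT hg
  have huniv : (greedyWalk e g.rank (Fintype.card D.E - 1)).used = univ :=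
    eq_univ_of_card _ (by rw [h.card_used]; omega)
  have hlast := (h.stuck hD hT hg fun ⟨y, hy⟩ => (mem_candidates.mp hy).2 (huniv ▸ mem_univ y)).1
  have hinj : Function.Injective fun i : Fin (Fintype.card D.E) => (greedyWalk e g.rank i).edge :=
    fun i j hij => by
      by_contra hne
      rcases lt_or_gt_of_ne (Fin.val_ne_of_ne hne) with hlt | hlt
      exacts [h.edge_ne hlt (by omega) hij, h.edge_ne hlt (by omega) hij.symm]
  refine ⟨Equiv.ofBijective _ ((Fintype.bijective_iff_injective_and_card _).mpr ⟨hinj, by simp⟩),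
    fun i => ?_, ⟨hpos, rfl⟩, fun i => rfl⟩
  simp only [Equiv.ofBijective_apply]
  rcases Nat.lt_or_ge ((i : ℕ) + 1) (Fintype.card D.E) with hi | hi
  · rw [cyclicSucc_of_lt hi]
    exact (mem_candidates.mp (greedyWalk_succ (h i (by omega))).1).1.symm
  · rw [cyclicSucc_of_eq (by omega), show (i : ℕ) = Fintype.card D.E - 1 by omega, hlast]
    rfl

end GreedyTour

section TemporalRank

open WalkState

variable {D : Multidigraph} {e : D.E} {r : D.V} {σ : Fin (Fintype.card D.E) ≃ D.E}

theorem IsEulerianTour.last_eq_first_succ (hσ : D.IsEulerianTour σ) (i : Fin (Fintype.card D.E))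
    (hi : (i : ℕ) + 1 < Fintype.card D.E) : D.last (σ i) = D.first (σ ⟨i + 1, hi⟩) := by
  rw [hσ i, cyclicSucc_of_lt hi]

theorem IsEulerianTour.last_eq_first_zero (hσ : D.IsEulerianTour σ) (i : Fin (Fintype.card D.E))
    (hi : (i : ℕ) + 1 = Fintype.card D.E) : D.last (σ i) = D.first (σ ⟨0, i.pos⟩) := by
  rw [hσ i, cyclicSucc_of_eq hi]

variable (σ) in
noncomputable def temporalRank : D.Ranking := fun v =>
  (σ.symm.subtypeEquiv fun x =>
      (by simp : D.first x = v ↔ σ.symm x ∈ (D.outEdges v).map σ.symm.toEmbedding)).trans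
    (orderIsoOfFin _ (by simp [card_outEdges])).symm.toEquiv

theorem temporalRank_lt_iff {v : D.V} {x y : {z : D.E // D.first z = v}} :
    temporalRank σ v x < temporalRank σ v y ↔ σ.symm x < σ.symm y := by
  simp [temporalRank]

theorem rank_temporalRank_lt_iff {x y : D.E} (hxy : D.first x = D.first y) :
    (temporalRank σ).rank x < (temporalRank σ).rank y ↔ σ.symm x < σ.symm y := by
  rw [Ranking.rank_eq hxy, Ranking.rank_eq rfl, Fin.val_fin_lt, temporalRank_lt_iff]

theorem rank_temporalRank_le_iff {x y : D.E} (hxy : D.first x = D.first y) :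
    (temporalRank σ).rank x ≤ (temporalRank σ).rank y ↔ σ.symm x ≤ σ.symm y := by
  simpa only [not_lt] using (rank_temporalRank_lt_iff (σ := σ) hxy.symm).not

theorem rank_temporalRank_eq_zero (hσe : D.BeginsWith σ e) : (temporalRank σ).rank e = 0 := by
  obtain ⟨h0, hσe⟩ := hσe
  refine (Ranking.rank_eq_zero_iff e).mpr fun y hy => (rank_temporalRank_le_iff hy.symm).mpr ?_
  rw [← hσe, σ.symm_apply_apply, Fin.le_def]
  exact Nat.zero_le _

-- Each vertex is left for the last time along its top edge, and the tour then enters a vertex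
-- that it leaves for the last time even later; this bounds the path to the root.
theorem isOrientedSpanningTree_topEdges_temporalRank (hD : D.Eulerian) (he : D.first e = r)
    (hσ : D.IsEulerianTour σ) (hσe : D.BeginsWith σ e) :
    D.IsOrientedSpanningTree ((temporalRank σ).topEdges r) r := by
  obtain ⟨h0, hσe⟩ := hσe
  set g := temporalRank σ
  let top : D.V → D.E := fun v =>
    (g v).symm ⟨D.outdeg v - 1, Nat.sub_lt (hD.outdeg_pos e v) one_pos⟩
  have first_top : ∀ v, D.first (top v) = v := fun v => ((g v).symm _).2
  have rank_top : ∀ v, g.rank (top v) = D.outdeg (D.first (top v)) - 1 := fun v => by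
    rw [Ranking.rank_symm_apply, first_top]
  have le_top : ∀ y, σ.symm y ≤ σ.symm (top (D.first y)) := fun y =>
    (rank_temporalRank_le_iff (first_top _).symm).mp
      ((Ranking.rank_eq_outdeg_sub_one_iff _).mp (rank_top _) y (first_top _).symm)
  refine isOrientedSpanningTree_iff.mpr ⟨fun x hx => hx.1, fun v hv => ⟨top v,
    ⟨⟨(first_top v).symm ▸ hv, rank_top v⟩, first_top v⟩, fun x ⟨hx, hxv⟩ =>
      Ranking.eq_of_rank_eq (hxv.trans (first_top v).symm) (by rw [hx.2, rank_top, hxv, first_top])⟩,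
    Relation.reflTransGen_of_exists_measure_lt (fun v => Fintype.card D.E - σ.symm (top v))
      fun a ha => ⟨D.last (top a),
        ⟨top a, ⟨(first_top a).symm ▸ ha, rank_top a⟩, Or.inl ⟨first_top a, rfl⟩⟩, fun hb => ?_⟩⟩
  set i := σ.symm (top a)
  have hi : (i : ℕ) + 1 < Fintype.card D.E := by
    by_contra hi
    refine hb ?_
    rw [← σ.apply_symm_apply (top a), hσ.last_eq_first_zero i (by omega), hσe, he]
  have hnext := le_top (σ ⟨i + 1, hi⟩)
  rw [σ.symm_apply_apply, ← hσ.last_eq_first_succ i hi, σ.apply_symm_apply, Fin.le_def] at hnext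
  have := (σ.symm (top (D.last (top a)))).2
  simp only at hnext
  omega

theorem greedyWalk_temporalRank (hσ : D.IsEulerianTour σ) (hσe : D.BeginsWith σ e) (k : ℕ)
    (hk : k < Fintype.card D.E) :
    (greedyWalk e (temporalRank σ).rank k).edge = σ ⟨k, hk⟩ ∧
      (greedyWalk e (temporalRank σ).rank k).used = ({x | (σ.symm x : ℕ) ≤ k} : Finset D.E) := by
  obtain ⟨h0, hσe⟩ := hσe
  induction k with
  | zero =>
    refine ⟨hσe.symm, ext fun x => ?_⟩
    simp [greedyWalk, ← hσe, ← Equiv.symm_apply_eq, Fin.ext_iff]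
  | succ k ih =>
    obtain ⟨hedge, hused⟩ := ih (by omega)
    have hcand : σ ⟨k + 1, hk⟩ ∈ (greedyWalk e (temporalRank σ).rank k).candidates := by
      rw [mem_candidates, hedge, hused, hσ.last_eq_first_succ _ hk]
      simp
    obtain ⟨hmem, hmin, hused'⟩ := greedyWalk_succ ⟨_, hcand⟩
    obtain ⟨hfirst, hnew⟩ := mem_candidates.mp hmem
    have hfirst' := hfirst.trans (mem_candidates.mp hcand).1.symm
    rw [hused] at hnew
    simp only [mem_filter, mem_univ, true_and, not_le] at hnew
    have hedge' : (greedyWalk e (temporalRank σ).rank (k + 1)).edge = σ ⟨k + 1, hk⟩ :=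
      Ranking.eq_of_rank_eq hfirst' (le_antisymm (hmin _ hcand)
        ((rank_temporalRank_le_iff hfirst'.symm).mpr (by simpa [Fin.le_def] using hnew)))
    refine ⟨hedge', ext fun x => ?_⟩
    rw [hused', hedge', hused]
    simp only [mem_insert, mem_filter, mem_univ, true_and, ← Equiv.symm_apply_eq, Fin.ext_iff]
    omega

end TemporalRank

section Bijection

variable {D : Multidigraph} {e : D.E} {r : D.V} {g : D.Ranking}

theorem temporalRank_eq_of_eq_greedyWalk {σ : Fin (Fintype.card D.E) ≃ D.E} (hg : g.rank e = 0)
    (h : GreedyAlive e g.rank (Fintype.card D.E - 1))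
    (hσ : ∀ i, σ i = (greedyWalk e g.rank i).edge) : temporalRank σ = g := by
  funext v
  refine Equiv.eq_of_lt_imp_lt fun x y hxy => ?_
  rw [temporalRank_lt_iff] at hxy
  have hx := hσ (σ.symm x)
  have hy := hσ (σ.symm y)
  rw [σ.apply_symm_apply] at hx hy
  have := h.rank_lt_rank hg hxy (by omega) (by rw [← hx, ← hy, x.2, y.2])
  rwa [← hx, ← hy, Ranking.rank_eq x.2, Ranking.rank_eq y.2, Fin.val_fin_lt] at this

noncomputable def tourTreeRanking (hD : D.Eulerian) (he : D.first e = r)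
    (σ : {σ : Fin (Fintype.card D.E) ≃ D.E // D.IsEulerianTour σ ∧ D.BeginsWith σ e}) :
    D.TreeRanking e r :=
  ⟨⟨_, isOrientedSpanningTree_topEdges_temporalRank hD he σ.2.1 σ.2.2⟩, fun v =>
    ⟨temporalRank σ.1 v,
      forall_isAdmissibleAt_iff.mpr ⟨rank_temporalRank_eq_zero σ.2.2, fun _ hx => hx.2⟩ v⟩⟩

theorem tourTreeRanking_bijective (hD : D.Eulerian) (he : D.first e = r) :
    Function.Bijective (tourTreeRanking hD he) := by
  refine ⟨fun σ τ hστ => Subtype.ext (Equiv.ext fun i => ?_), fun d => ?_⟩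
  · have hrank : temporalRank σ.1 = temporalRank τ.1 := congrArg TreeRanking.ranking hστ
    rw [← (greedyWalk_temporalRank σ.2.1 σ.2.2 i i.2).1, hrank,
      (greedyWalk_temporalRank τ.2.1 τ.2.2 i i.2).1]
  · obtain ⟨hg, hgT⟩ := forall_isAdmissibleAt_iff.mp fun v => (d.2 v).2
    have hT := d.1.2
    subst he
    obtain ⟨σ, hσ, hσe, hσW⟩ := exists_isEulerianTour_eq_greedyWalk hD hT hgT
    exact ⟨⟨σ, hσ, hσe⟩, TreeRanking.ext
      (temporalRank_eq_of_eq_greedyWalk hg (greedyAlive_card_sub_one hD hT hgT) hσW)⟩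

end Bijection

end Multidigraph

/-- BEST theorem: the number of Eulerian tours of `D` beginning
with a fixed edge `e` with initial vertex `r` equals the number of oriented
spanning trees of `D` rooted at `r` times `∏_u (outdeg(u) - 1)!`. -/
theorem stmt14 (D : Multidigraph) (hD : D.Eulerian) (e : D.E) (r : D.V)
    (he : D.first e = r) :
    Nat.card {σ : Fin (Fintype.card D.E) ≃ D.E //
        D.IsEulerianTour σ ∧ D.BeginsWith σ e} =
      Nat.card {T : Set D.E // D.IsOrientedSpanningTree T r} *
        ∏ u : D.V, Nat.factorial (D.outdeg u - 1) := by
  rw [← Multidigraph.card_treeRanking he,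
    Nat.card_eq_of_bijective _ (Multidigraph.tourTreeRanking_bijective hD he)]
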